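/- Let (c_l)_{l∈ℤ} be a sequence of complex numbers with |c_l| ≤ M for all l, let φ be a C² 1-periodic function, and for n ∈ ℕ define E_n(x) = φ(x) · Σ_{l=−n}^{n} c_l e(lx) − Σ_{l=−n}^{n} (c ∗ φ̂)(l) e(lx). Then for every n and every j ∈ ℤ, the Fourier coefficients of E_n satisfy |Ê_n(j)| ≤ M · Σ_{|s| ≥ | |j| − n |} |φ̂(s)|. -/

import Mathlib

open Filter MeasureTheory

/-- `e(x) = e^{2πix}`. -/
noncomputable def expc (x : ℝ) : ℂ := Complex.exp (2 * (Real.pi : ℂ) * Complex.I * (x : ℂ))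

/-- Symmetric partial sums `S_n(x) = Σ_{l=-n}^n c_l e(lx)`. -/
noncomputable def Sc (c : ℤ → ℂ) (n : ℕ) (x : ℝ) : ℂ :=
  ∑ l ∈ Finset.Icc (-(n : ℤ)) (n : ℤ), c l * expc ((l : ℝ) * x)

/-- Fourier coefficient `φ̂(l) = ∫₀¹ φ(x) e(-lx) dx` of a 1-periodic function. -/
noncomputable def fcC (φ : ℝ → ℂ) (l : ℤ) : ℂ :=
  ∫ x in (0:ℝ)..1, φ x * expc (-(l : ℝ) * x)


/-- Discrete convolution `(c ∗ φ̂)(l) = Σ_j c_j φ̂(l - j)`. -/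
noncomputable def convC (c : ℤ → ℂ) (φ : ℝ → ℂ) (l : ℤ) : ℂ :=
  ∑' j : ℤ, c j * fcC φ (l - j)

/-!
Expanding the product gives `Ê_n(j) = Σ_{|l| ≤ n} c_l φ̂(j - l) - [|j| ≤ n] Σ_l c_l φ̂(j - l)`.
If `|j| ≤ n` this is minus the tail of the convolution over `|l| > n`, otherwise it is the finite
sum over `|l| ≤ n`; in both cases every remaining index `l` satisfies `||j| - n| ≤ |j - l|`, so
the sum is at most `M Σ_{|s| ≥ ||j| - n|} |φ̂(s)|`. The series converge absolutely because `φ̂(s) = O(s⁻²)`, by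
integrating by parts twice.
-/

open Complex Real

lemma expc_add (a b : ℝ) : expc (a + b) = expc a * expc b := by
  rw [expc, expc, expc, ← Complex.exp_add]
  push_cast; ring_nf

lemma norm_expc (x : ℝ) : ‖expc x‖ = 1 := by
  rw [expc, Complex.norm_exp]
  simp

lemma continuous_expc_mul (r : ℝ) : Continuous fun x : ℝ => expc (r * x) := by
  unfold expc
  fun_prop

lemma fcC_eq_fourierCoeffOn (f : ℝ → ℂ) (l : ℤ) : fcC f l = fourierCoeffOn zero_lt_one f l := by
  rw [fourierCoeffOn_eq_integral, fcC]
  simp only [sub_zero, div_one, one_smul, fourier_coe_apply, smul_eq_mul, expc]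
  congr 1; ext x; push_cast; ring_nf

lemma fcC_eq_fcC_deriv_div {f f' : ℝ → ℂ} (hf : ∀ x, HasDerivAt f (f' x) x) (hf' : Continuous f')
    (hper : Function.Periodic f 1) {l : ℤ} (hl : l ≠ 0) :
    fcC f l = fcC f' l / (2 * π * I * l) := by
  rw [fcC_eq_fourierCoeffOn, fcC_eq_fourierCoeffOn,
    fourierCoeffOn_of_hasDerivAt zero_lt_one hl (fun x _ => hf x) (hf'.intervalIntegrable 0 1),
    show f 1 = f 0 by simpa using hper 0]
  field_simp
  push_cast
  ring

lemma norm_fcC_le (f : ℝ → ℂ) (l : ℤ) : ‖fcC f l‖ ≤ ∫ x in (0:ℝ)..1, ‖f x‖ := by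
  rw [fcC]
  simpa only [norm_mul, norm_expc, mul_one] using
    intervalIntegral.norm_integral_le_integral_norm
      (f := fun x => f x * expc (-(l : ℝ) * x)) zero_le_one

lemma Function.Periodic.deriv {𝕜 F : Type*} [NontriviallyNormedField 𝕜] [NormedAddCommGroup F]
    [NormedSpace 𝕜 F] {f : 𝕜 → F} {c : 𝕜} (hf : Function.Periodic f c) :
    Function.Periodic (deriv f) c := fun x => by
  rw [← deriv_comp_add_const, show (fun y => f (y + c)) = f from funext hf]

lemma norm_fcC_le_of_contDiff_two {φ : ℝ → ℂ} (hφ : ContDiff ℝ 2 φ)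
    (hper : Function.Periodic φ 1) {l : ℤ} (hl : l ≠ 0) :
    ‖fcC φ l‖ ≤ (∫ x in (0:ℝ)..1, ‖deriv (deriv φ) x‖) / (l : ℝ) ^ 2 := by
  obtain ⟨hφd, -, hφ'⟩ := contDiff_succ_iff_deriv.mp (show ContDiff ℝ (1 + 1) φ from hφ)
  have hφ'd : Differentiable ℝ (deriv φ) := hφ'.differentiable one_ne_zero
  rw [fcC_eq_fcC_deriv_div (fun x => (hφd x).hasDerivAt) hφ'.continuous hper hl,
    fcC_eq_fcC_deriv_div (fun x => (hφ'd x).hasDerivAt) (hφ'.continuous_deriv le_rfl) hper.deriv hl,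
    div_div, norm_div]
  have hl' : (0 : ℝ) < (l : ℝ) ^ 2 := by positivity
  refine div_le_div₀ (intervalIntegral.integral_nonneg zero_le_one fun _ _ => norm_nonneg _)
    (norm_fcC_le _ l) hl' ?_
  have hpi : 1 ≤ (2 * π) ^ 2 := by nlinarith [pi_gt_three]
  calc (l : ℝ) ^ 2 ≤ (2 * π) ^ 2 * (l : ℝ) ^ 2 := le_mul_of_one_le_left hl'.le hpi
    _ = ‖2 * (π : ℂ) * I * l * (2 * π * I * l)‖ := by
      simp only [norm_mul, Complex.norm_ofNat, norm_real, norm_I, Complex.norm_intCast]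
      rw [Real.norm_of_nonneg pi_pos.le, ← sq_abs (l : ℝ)]
      ring

lemma summable_norm_fcC {φ : ℝ → ℂ} (hφ : ContDiff ℝ 2 φ) (hper : Function.Periodic φ 1) :
    Summable fun l => ‖fcC φ l‖ := by
  refine .of_norm_bounded_eventually
    ((summable_one_div_int_pow.mpr one_lt_two).mul_left (∫ x in (0:ℝ)..1, ‖deriv (deriv φ) x‖)) ?_
  filter_upwards [eventually_cofinite_ne 0] with l hl
  simpa [div_eq_mul_inv] using norm_fcC_le_of_contDiff_two hφ hper hl

lemma continuous_Sc (c : ℤ → ℂ) (n : ℕ) : Continuous (Sc c n) :=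
  continuous_finsetSum _ fun l _ => continuous_const.mul (continuous_expc_mul l)

lemma fcC_sub {f g : ℝ → ℂ} (hf : Continuous f) (hg : Continuous g) (l : ℤ) :
    fcC (fun x => f x - g x) l = fcC f l - fcC g l := by
  simp only [fcC, sub_mul]
  exact intervalIntegral.integral_sub ((hf.mul (continuous_expc_mul _)).intervalIntegrable 0 1)
    ((hg.mul (continuous_expc_mul _)).intervalIntegrable 0 1)

lemma fcC_mul_Sc {φ : ℝ → ℂ} (hφ : Continuous φ) (c : ℤ → ℂ) (n : ℕ) (j : ℤ) :
    fcC (fun x => φ x * Sc c n x) j = ∑ l ∈ Finset.Icc (-(n : ℤ)) n, c l * fcC φ (j - l) := by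
  have h : ∀ x, φ x * Sc c n x * expc (-(j : ℝ) * x) =
      ∑ l ∈ Finset.Icc (-(n : ℤ)) n, c l * (φ x * expc (-((j - l : ℤ) : ℝ) * x)) := by
    intro x
    rw [Sc, Finset.mul_sum, Finset.sum_mul]
    refine Finset.sum_congr rfl fun l _ => ?_
    rw [show -((j - l : ℤ) : ℝ) * x = l * x + -j * x by push_cast; ring, expc_add]
    ring
  simp only [fcC, h]
  rw [intervalIntegral.integral_finsetSum]
  · simp only [intervalIntegral.integral_const_mul]
  · exact fun l _ => (continuous_const.mul (hφ.mul (continuous_expc_mul _))).intervalIntegrable 0 1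

lemma fcC_one (l : ℤ) : fcC (fun _ => 1) l = if l = 0 then 1 else 0 := by
  split_ifs with hl
  · simp [fcC, hl, expc]
  · rw [fcC_eq_fcC_deriv_div (f' := 0) (fun _ => hasDerivAt_const _ _) continuous_const
      (fun _ => rfl) hl]
    simp [fcC]

lemma fcC_Sc (d : ℤ → ℂ) (n : ℕ) (j : ℤ) :
    fcC (Sc d n) j = if j ∈ Finset.Icc (-(n : ℤ)) n then d j else 0 := by
  simpa only [one_mul, fcC_one, sub_eq_zero, mul_ite, mul_one, mul_zero, Finset.sum_ite_eq] using
    fcC_mul_Sc (φ := fun _ => 1) continuous_const d n j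

lemma abs_abs_sub_le_abs_sub_of_mem_Icc_iff {j l : ℤ} {n : ℕ}
    (h : j ∈ Finset.Icc (-(n : ℤ)) n ↔ l ∉ Finset.Icc (-(n : ℤ)) n) : |(|j| - n)| ≤ |j - l| := by
  have hn : (n : ℤ) ∈ Set.uIcc |j| |l| := by
    simp only [Finset.mem_Icc, ← abs_le] at h
    rw [Set.mem_uIcc]
    omega
  rw [abs_sub_comm]
  exact (Set.abs_sub_left_of_mem_uIcc hn).trans
    ((abs_sub_comm _ _).trans_le (abs_abs_sub_abs_le j l))

lemma summable_mul_shift {c f : ℤ → ℂ} {M : ℝ} (hc : ∀ l, ‖c l‖ ≤ M)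
    (hf : Summable fun s => ‖f s‖) (j : ℤ) : Summable fun l => c l * f (j - l) :=
  .of_norm_bounded (((Equiv.subLeft j).summable_iff.mpr hf).mul_left M) fun l => by
    rw [norm_mul]
    exact mul_le_mul_of_nonneg_right (hc l) (norm_nonneg _)

lemma norm_tsum_mul_shift_le {c f : ℤ → ℂ} {M : ℝ} (hc : ∀ l, ‖c l‖ ≤ M)
    (hf : Summable fun s => ‖f s‖) (p q : ℤ → Prop) [DecidablePred p] (j : ℤ)
    (hpq : ∀ l, q l → p (j - l)) :
    ‖∑' l : {l // q l}, c l * f (j - l)‖ ≤ M * ∑' s, if p s then ‖f s‖ else 0 := by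
  have hM : 0 ≤ M := (norm_nonneg _).trans (hc 0)
  set g : ℤ → ℝ := fun s => if p s then ‖f s‖ else 0
  have hg_nonneg : ∀ s, 0 ≤ g s := fun s => by positivity
  have hg : Summable g := hf.of_nonneg_of_le hg_nonneg fun s => by
    by_cases h : p s <;> simp [g, h]
  have hgj : Summable fun l => M * g (j - l) :=
    ((Equiv.subLeft j).summable_iff.mpr hg).mul_left M
  calc ‖∑' l : {l // q l}, c l * f (j - l)‖ ≤ ∑' l : {l // q l}, M * g (j - l) :=
        tsum_of_norm_bounded (hgj.subtype _).hasSum fun l => by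
          rw [Function.comp_apply, norm_mul, show g (j - l) = ‖f (j - l)‖ from if_pos (hpq l l.2)]
          exact mul_le_mul_of_nonneg_right (hc l) (norm_nonneg _)
    _ ≤ ∑' l, M * g (j - l) := hgj.tsum_subtype_le _ {l | q l} fun l => mul_nonneg hM (hg_nonneg _)
    _ = M * ∑' s, g s := by rw [tsum_mul_left, ← (Equiv.subLeft j).tsum_eq g]; rfl

/-- For `|c_l| ≤ M`, `φ` a `C²` 1-periodic function, and
`E_n(x) = φ(x) S_n(x) - Σ_{|l| ≤ n} (c∗φ̂)(l) e(lx)`, the Fourier coefficients of `E_n`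
satisfy `|Ê_n(j)| ≤ M Σ_{|s| ≥ ||j| - n|} |φ̂(s)|`. -/
theorem statement16 (c : ℤ → ℂ) (M : ℝ) (φ : ℝ → ℂ) (E : ℕ → ℝ → ℂ)
    (hc : ∀ l : ℤ, ‖c l‖ ≤ M)
    (hφ : ContDiff ℝ 2 φ) (hper : Function.Periodic φ 1)
    (hE : ∀ (n : ℕ) (x : ℝ), E n x = φ x * Sc c n x - Sc (convC c φ) n x) :
    ∀ (n : ℕ) (j : ℤ), ‖fcC (E n) j‖ ≤
      M * ∑' s : ℤ, (if |(|j| - (n : ℤ))| ≤ |s| then ‖fcC φ s‖ else 0) := by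
  intro n j
  have hf := summable_norm_fcC hφ hper
  have hφc := hφ.continuous
  rw [funext (hE n), fcC_sub (f := fun x => φ x * Sc c n x) (hφc.mul (continuous_Sc c n))
    (continuous_Sc _ n), fcC_mul_Sc hφc, fcC_Sc]
  by_cases hj : j ∈ Finset.Icc (-(n : ℤ)) n
  · rw [if_pos hj, convC, ← (summable_mul_shift hc hf j).sum_add_tsum_subtype_compl,
      sub_add_cancel_left, norm_neg]
    exact norm_tsum_mul_shift_le hc hf _ _ j fun l hl =>
      abs_abs_sub_le_abs_sub_of_mem_Icc_iff (iff_of_true hj hl)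
  · rw [if_neg hj, sub_zero, ← Finset.tsum_subtype]
    exact norm_tsum_mul_shift_le hc hf _ _ j fun l hl =>
      abs_abs_sub_le_abs_sub_of_mem_Icc_iff (iff_of_false hj (not_not_intro hl))
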